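/- For each k, l and N, the set {T_p : p ∈ 𝒫(k,l), b(p) ≤ N} is a basis of the span of {T_p : p ∈ 𝒫(k,l)}, where b(p) is the number of blocks of p. -/

import Mathlib

/-!
Collect the indices of all legs into one map `f : α → β`. Then `T_p f = 1` iff `p ≤ ker f`,
and `T̂_q f = 1` iff `ker f = q`, so `T_p = ∑_{q ≥ p} T̂_q`, and `T̂_q = 0` once `q` has more
blocks than `β` has elements. Downward induction over the finite lattice of partitions,
`T̂_q = T_q - ∑_{r > q} T̂_r`, puts every `T̂_q`, hence every `T_p`, into the span of the `T_p`
with `b(p) ≤ |β|`. For independence, a partition `q` with `b(q) ≤ |β|` is the kernel of some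
`f`, and `T_p f = [p ≤ q]`: the evaluation matrix is unitriangular.
-/

theorem Setoid.ker_comp_of_injective {α β γ : Type*} (f : α → β) {g : β → γ}
    (hg : g.Injective) : Setoid.ker (g ∘ f) = Setoid.ker f :=
  Setoid.ext fun _ _ => hg.eq_iff

theorem Setoid.card_quotient_ker_le {α β : Type*} [Finite β] (f : α → β) :
    Nat.card (Quotient (Setoid.ker f)) ≤ Nat.card β :=
  (Nat.card_congr (Setoid.quotientKerEquivRange f)).trans_le
    (Nat.card_le_card_of_injective _ Subtype.val_injective)

theorem Setoid.exists_ker_eq_of_card_le {α β : Type*} [Finite α] [Finite β] {q : Setoid α}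
    (h : Nat.card (Quotient q) ≤ Nat.card β) : ∃ f : α → β, Setoid.ker f = q := by
  have := Fintype.ofFinite (Quotient q)
  have := Fintype.ofFinite β
  rw [Nat.card_eq_fintype_card, Nat.card_eq_fintype_card] at h
  obtain ⟨e⟩ := Function.Embedding.nonempty_of_card_le h
  exact ⟨e ∘ Quotient.mk'', (Setoid.ker_comp_of_injective _ e.injective).trans (Setoid.ker_mk_eq q)⟩

instance Setoid.instFinite {α : Type*} [Finite α] : Finite (Setoid α) :=
  Finite.of_injective (fun p : Setoid α => p.r) fun _ _ h =>
    Setoid.ext fun x y => iff_of_eq (congrFun₂ h x y)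

noncomputable instance Setoid.instFintype {α : Type*} [Finite α] : Fintype (Setoid α) :=
  Fintype.ofFinite _

open Classical in
theorem linearIndependent_of_apply_eq_ite_le {ι X R : Type*} [Finite ι] [PartialOrder ι]
    [Ring R] {v : ι → X → R} (x : ι → X) (hvx : ∀ i j, v i (x j) = if i ≤ j then 1 else 0) :
    LinearIndependent R v := by
  have := Fintype.ofFinite ι
  rw [Fintype.linearIndependent_iff]
  intro g hg j
  induction j using WellFoundedLT.induction with
  | _ j IH =>
    have hgj : ∑ i, (if i ≤ j then g i else 0) = 0 := by
      simpa [hvx, Finset.sum_apply] using congrFun hg (x j)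
    rwa [Finset.sum_eq_single j (fun i _ hij => ?_) (by simp), if_pos le_rfl] at hgj
    split_ifs with hle
    exacts [IH i (hle.lt_of_ne hij), rfl]

variable {α β : Type*}

open Classical in
/-- The paper's `T_p`, as a function of the combined multi-index `f : α → β`. -/
noncomputable def partitionMap (R : Type*) [Zero R] [One R] (p : Setoid α) : (α → β) → R :=
  fun f => if ∀ x y, p.r x y → f x = f y then 1 else 0

open Classical in
/-- The paper's `T̂_q`. -/
noncomputable def exactPartitionMap (R : Type*) [Zero R] [One R] (q : Setoid α) :
    (α → β) → R :=
  fun f => if Setoid.ker f = q then 1 else 0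

section ZeroOne

variable {R : Type*} [Zero R] [One R]

open Classical in
theorem partitionMap_apply (p : Setoid α) (f : α → β) :
    partitionMap R p f = if p ≤ Setoid.ker f then 1 else 0 :=
  if_congr ⟨fun h _ _ hxy => h _ _ hxy, fun h _ _ hxy => h hxy⟩ rfl rfl

theorem exactPartitionMap_eq_zero [Finite β] {q : Setoid α}
    (hq : Nat.card β < Nat.card (Quotient q)) : exactPartitionMap R q = (0 : (α → β) → R) := by
  funext f
  refine if_neg fun hf => ?_
  have := Setoid.card_quotient_ker_le f
  rw [hf] at this
  omega

end ZeroOne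

variable [Finite α]

open Classical in
theorem partitionMap_eq_sum {R : Type*} [AddCommMonoidWithOne R] (p : Setoid α) :
    partitionMap R p = ∑ q with p ≤ q, exactPartitionMap (β := β) R q := by
  funext f
  simp [partitionMap_apply, exactPartitionMap, Finset.sum_apply]

section Ring

variable {R : Type*} [Ring R]

theorem exactPartitionMap_mem_span [Finite β] {n : ℕ} (hn : Nat.card β ≤ n) (q : Setoid α) :
    exactPartitionMap R q ∈ Submodule.span R
      (Set.range fun p : {p : Setoid α // Nat.card (Quotient p) ≤ n} =>
        partitionMap (β := β) R p.1) := by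
  classical
  induction q using WellFoundedGT.induction with
  | _ q IH =>
    by_cases hq : Nat.card (Quotient q) ≤ n
    · have hIoi : ({r | q ≤ r} : Finset (Setoid α)).erase q = ({r | q < r} : Finset _) := by
        ext r
        simp [lt_iff_le_and_ne, and_comm, eq_comm]
      have hinv : exactPartitionMap R q =
          partitionMap R q - ∑ r with q < r, exactPartitionMap (β := β) R r := by
        rw [partitionMap_eq_sum, ← Finset.add_sum_erase _ _ (a := q) (by simp), hIoi,
          add_sub_cancel_right]
      rw [hinv]
      exact sub_mem (Submodule.subset_span ⟨⟨q, hq⟩, rfl⟩)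
        (Submodule.sum_mem _ fun r hr => IH r (Finset.mem_filter.mp hr).2)
    · rw [exactPartitionMap_eq_zero (by omega)]
      exact Submodule.zero_mem _

theorem span_partitionMap_of_card_le [Finite β] {n : ℕ} (hn : Nat.card β ≤ n) :
    Submodule.span R
        (Set.range fun p : {p : Setoid α // Nat.card (Quotient p) ≤ n} =>
          partitionMap (β := β) R p.1) =
      Submodule.span R (Set.range (partitionMap R)) := by
  refine le_antisymm (Submodule.span_mono (Set.range_comp_subset_range Subtype.val (partitionMap R))) ?_
  rw [Submodule.span_le, Set.range_subset_iff]
  intro p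
  rw [partitionMap_eq_sum]
  exact Submodule.sum_mem _ fun q _ => exactPartitionMap_mem_span hn q

theorem linearIndependent_partitionMap [Finite β] {n : ℕ} (hn : n ≤ Nat.card β) :
    LinearIndependent R
      fun p : {p : Setoid α // Nat.card (Quotient p) ≤ n} => partitionMap (β := β) R p.1 := by
  choose f hf using fun p : {p : Setoid α // Nat.card (Quotient p) ≤ n} =>
    Setoid.exists_ker_eq_of_card_le (β := β) (p.2.trans hn)
  refine linearIndependent_of_apply_eq_ite_le f fun p p' => ?_
  rw [partitionMap_apply, hf, Subtype.coe_le_coe]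

variable (R) in
noncomputable def sumArrowCurry (ι₁ ι₂ β : Type*) :
    ((ι₁ ⊕ ι₂ → β) → R) ≃ₗ[R] ((ι₂ → β) → (ι₁ → β) → R) :=
  (LinearEquiv.funCongrLeft R R
    ((Equiv.prodComm _ _).trans (Equiv.sumArrowEquivProdArrow ι₁ ι₂ β).symm)).trans
    (LinearEquiv.curry R R _ _)

theorem sumArrowCurry_apply {ι₁ ι₂ : Type*} (F : (ι₁ ⊕ ι₂ → β) → R) (jl : ι₂ → β)
    (ik : ι₁ → β) : sumArrowCurry R ι₁ ι₂ β F jl ik = F (Sum.elim ik jl) :=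
  rfl

end Ring

open Classical in
/-- For each `k`, `l`, `N`, the family
`{T_p : p ∈ 𝒫(k,l), b(p) ≤ N}` (where `b(p)` is the number of blocks of `p`)
is a basis of `span{T_p : p ∈ 𝒫(k,l)}`: it is linearly independent and its
span equals the span of all the `T_p`. -/
theorem stmt15 (N k l : ℕ) :
    LinearIndependent ℂ
      (fun p : {p : Setoid (Fin k ⊕ Fin l) // Nat.card (Quotient p) ≤ N} =>
        fun (jl : Fin l → Fin N) (ik : Fin k → Fin N) =>
          (if ∀ x y, p.val.r x y → Sum.elim ik jl x = Sum.elim ik jl y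
           then (1 : ℂ) else 0)) ∧
    Submodule.span ℂ
      (Set.range (fun p : {p : Setoid (Fin k ⊕ Fin l) // Nat.card (Quotient p) ≤ N} =>
        fun (jl : Fin l → Fin N) (ik : Fin k → Fin N) =>
          (if ∀ x y, p.val.r x y → Sum.elim ik jl x = Sum.elim ik jl y
           then (1 : ℂ) else 0))) =
    Submodule.span ℂ
      (Set.range (fun p : Setoid (Fin k ⊕ Fin l) =>
        fun (jl : Fin l → Fin N) (ik : Fin k → Fin N) =>
          (if ∀ x y, p.r x y → Sum.elim ik jl x = Sum.elim ik jl y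
           then (1 : ℂ) else 0))) := by
  have hN : Nat.card (Fin N) = N := Nat.card_fin N
  let e := sumArrowCurry ℂ (Fin k) (Fin l) (Fin N)
  have he (p : Setoid (Fin k ⊕ Fin l)) (jl : Fin l → Fin N) (ik : Fin k → Fin N) :
      (if ∀ x y, p.r x y → Sum.elim ik jl x = Sum.elim ik jl y then (1 : ℂ) else 0) =
        e (partitionMap ℂ p) jl ik := by
    simp only [e, sumArrowCurry_apply, partitionMap]
    -- the two sides decide the condition with different `Decidable` instances
    congr
  simp only [he]
  have hli : LinearIndependent ℂ
      fun p : {p : Setoid (Fin k ⊕ Fin l) // Nat.card (Quotient p) ≤ N} => e (partitionMap ℂ p.1) :=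
    e.toLinearMap.linearIndependent_iff_of_injOn e.injective.injOn |>.mpr
      (linearIndependent_partitionMap hN.ge)
  refine ⟨hli, ?_⟩
  rw [Set.range_comp' e, Set.range_comp' e, ← LinearEquiv.coe_coe, Submodule.span_image,
    Submodule.span_image, span_partitionMap_of_card_le hN.le]
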